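/- Let w ∈ A_1 and let M be the Hardy–Littlewood maximal operator. Suppose ψ₁ and ψ₂ are positive functions on ℝⁿ × (0,∞) for which there is a constant C > 0, independent of a and r, with ∫_r^∞ ψ₁(a,t) dt/t ≤ C·ψ₂(a,r) for every (a,r) ∈ ℝⁿ × (0,∞). Then M is bounded from M^{1,w}_{ψ₁} to WM^{1,w}_{ψ₂}: there is C' > 0 such that ‖Mf‖_{WM^{1,w}_{ψ₂}} ≤ C'·‖f‖_{M^{1,w}_{ψ₁}} for every f ∈ M^{1,w}_{ψ₁}. -/

import Mathlib

open MeasureTheory Metric Set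
open scoped ENNReal

noncomputable section

/-- The weighted measure of a set: `w(E) = ∫_E w(x) dx`, valued in `ℝ≥0∞`. -/
def wSet {n : ℕ} (w : EuclideanSpace ℝ (Fin n) → ℝ)
    (E : Set (EuclideanSpace ℝ (Fin n))) : ℝ≥0∞ :=
  ∫⁻ x in E, ENNReal.ofReal (w x)

/-- The weighted Lebesgue norm `‖f‖_{L^{p,w}(Ω)} = (∫_Ω |f(x)|^p w(x) dx)^{1/p}`. -/
def wLp {n : ℕ} (p : ℝ) (w f : EuclideanSpace ℝ (Fin n) → ℝ)
    (Ω : Set (EuclideanSpace ℝ (Fin n))) : ℝ≥0∞ :=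
  (∫⁻ x in Ω, ENNReal.ofReal |f x| ^ p * ENNReal.ofReal (w x)) ^ (1 / p)

/-- The weighted Lebesgue norm for an `ℝ≥0∞`-valued function. -/
def wLpE {n : ℕ} (p : ℝ) (w : EuclideanSpace ℝ (Fin n) → ℝ)
    (g : EuclideanSpace ℝ (Fin n) → ℝ≥0∞) (Ω : Set (EuclideanSpace ℝ (Fin n))) : ℝ≥0∞ :=
  (∫⁻ x in Ω, g x ^ p * ENNReal.ofReal (w x)) ^ (1 / p)

/-- The weak weighted Lebesgue norm `‖f‖_{WL^{p,w}(Ω)} = sup_{γ>0} γ·w({x ∈ Ω : |f(x)| > γ})^{1/p}`. -/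
def wWeakLp {n : ℕ} (p : ℝ) (w f : EuclideanSpace ℝ (Fin n) → ℝ)
    (Ω : Set (EuclideanSpace ℝ (Fin n))) : ℝ≥0∞ :=
  ⨆ γ : Set.Ioi (0 : ℝ),
    ENNReal.ofReal γ.1 * (wSet w {x | x ∈ Ω ∧ γ.1 < |f x|}) ^ (1 / p)

/-- The weak weighted Lebesgue norm for an `ℝ≥0∞`-valued function. -/
def wWeakLpE {n : ℕ} (p : ℝ) (w : EuclideanSpace ℝ (Fin n) → ℝ)
    (g : EuclideanSpace ℝ (Fin n) → ℝ≥0∞) (Ω : Set (EuclideanSpace ℝ (Fin n))) : ℝ≥0∞ :=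
  ⨆ γ : Set.Ioi (0 : ℝ),
    ENNReal.ofReal γ.1 * (wSet w {x | x ∈ Ω ∧ ENNReal.ofReal γ.1 < g x}) ^ (1 / p)

/-- `f ∈ L^{p,w}_loc`: `f` is measurable and `‖f‖_{L^{p,w}(B)} < ∞` on every ball. -/
def MemLocWLp {n : ℕ} (p : ℝ) (w f : EuclideanSpace ℝ (Fin n) → ℝ) : Prop :=
  Measurable f ∧ ∀ (a : EuclideanSpace ℝ (Fin n)) (r : ℝ), 0 < r → wLp p w f (ball a r) < ⊤

/-- A weight: nonnegative, measurable, locally integrable, positive a.e. -/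
def IsWeight {n : ℕ} (w : EuclideanSpace ℝ (Fin n) → ℝ) : Prop :=
  Measurable w ∧ (∀ x, 0 ≤ w x) ∧ LocallyIntegrable w volume ∧ ∀ᵐ x ∂volume, 0 < w x

/-- The Muckenhoupt class `A_p` for `1 < p`. -/
def MuckAp {n : ℕ} (p : ℝ) (w : EuclideanSpace ℝ (Fin n) → ℝ) : Prop :=
  ∃ C : ℝ, 0 < C ∧ ∀ (a : EuclideanSpace ℝ (Fin n)) (r : ℝ), 0 < r →
    ((volume (ball a r))⁻¹ * ∫⁻ x in ball a r, ENNReal.ofReal (w x)) *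
      ((volume (ball a r))⁻¹ *
        ∫⁻ x in ball a r, ENNReal.ofReal (w x ^ (-(1 / (p - 1))))) ^ (p - 1) ≤
      ENNReal.ofReal C

/-- The Muckenhoupt class `A_1`. -/
def MuckA1 {n : ℕ} (w : EuclideanSpace ℝ (Fin n) → ℝ) : Prop :=
  ∃ C : ℝ, 0 < C ∧ ∀ (a : EuclideanSpace ℝ (Fin n)) (r : ℝ), 0 < r →
    ((volume (ball a r))⁻¹ * ∫⁻ x in ball a r, ENNReal.ofReal (w x)) *
      essSup (fun x => ENNReal.ofReal (w x)⁻¹) (volume.restrict (ball a r)) ≤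
      ENNReal.ofReal C

/-- The class `A_{p,q}` for `1 < p`, where `p'` is the conjugate exponent of `p`. -/
def MuckApq {n : ℕ} (p q p' : ℝ) (w : EuclideanSpace ℝ (Fin n) → ℝ) : Prop :=
  ∃ C : ℝ, 0 < C ∧ ∀ (a : EuclideanSpace ℝ (Fin n)) (r : ℝ), 0 < r →
    ((volume (ball a r))⁻¹ * ∫⁻ x in ball a r, ENNReal.ofReal (w x ^ q)) ^ (1 / q) *
      ((volume (ball a r))⁻¹ * ∫⁻ x in ball a r, ENNReal.ofReal (w x ^ (-p'))) ^ (1 / p') ≤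
      ENNReal.ofReal C

/-- The class `A_{1,q}`. -/
def MuckA1q {n : ℕ} (q : ℝ) (w : EuclideanSpace ℝ (Fin n) → ℝ) : Prop :=
  ∃ C : ℝ, 0 < C ∧ ∀ (a : EuclideanSpace ℝ (Fin n)) (r : ℝ), 0 < r →
    ((volume (ball a r))⁻¹ * ∫⁻ x in ball a r, ENNReal.ofReal (w x ^ q)) ^ (1 / q) *
      essSup (fun x => ENNReal.ofReal (w x)⁻¹) (volume.restrict (ball a r)) ≤
      ENNReal.ofReal C

/-- The Hardy–Littlewood maximal operator. -/
def HLMax {n : ℕ} (f : EuclideanSpace ℝ (Fin n) → ℝ)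
    (x : EuclideanSpace ℝ (Fin n)) : ℝ≥0∞ :=
  ⨆ r : Set.Ioi (0 : ℝ), (volume (ball x r.1))⁻¹ * ∫⁻ y in ball x r.1, ENNReal.ofReal |f y|

/-- The fractional integral operator `I_α` (applied to `|f|`, valued in `ℝ≥0∞`). -/
def fracIntE {n : ℕ} (α : ℝ) (f : EuclideanSpace ℝ (Fin n) → ℝ)
    (x : EuclideanSpace ℝ (Fin n)) : ℝ≥0∞ :=
  ∫⁻ y, ENNReal.ofReal |f y| / ENNReal.ofReal (dist x y ^ ((n : ℝ) - α))

/-- The fractional maximal operator `M_α`. -/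
def fracMax {n : ℕ} (α : ℝ) (f : EuclideanSpace ℝ (Fin n) → ℝ)
    (x : EuclideanSpace ℝ (Fin n)) : ℝ≥0∞ :=
  ⨆ r : Set.Ioi (0 : ℝ),
    (volume (ball x r.1)) ^ (α / (n : ℝ) - 1) * ∫⁻ y in ball x r.1, ENNReal.ofReal |f y|

/-- The generalized weighted Morrey norm `‖f‖_{M^{p,w}_ψ}`. -/
def morreyNorm {n : ℕ} (p : ℝ) (w : EuclideanSpace ℝ (Fin n) → ℝ)
    (ψ : EuclideanSpace ℝ (Fin n) → ℝ → ℝ) (f : EuclideanSpace ℝ (Fin n) → ℝ) : ℝ≥0∞ :=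
  ⨆ (a : EuclideanSpace ℝ (Fin n)) (r : Set.Ioi (0 : ℝ)),
    (ENNReal.ofReal (ψ a r.1))⁻¹ * wSet w (ball a r.1) ^ (-(1 / p)) * wLp p w f (ball a r.1)

/-- The generalized weighted Morrey norm for an `ℝ≥0∞`-valued function. -/
def morreyNormE {n : ℕ} (p : ℝ) (w : EuclideanSpace ℝ (Fin n) → ℝ)
    (ψ : EuclideanSpace ℝ (Fin n) → ℝ → ℝ) (g : EuclideanSpace ℝ (Fin n) → ℝ≥0∞) : ℝ≥0∞ :=
  ⨆ (a : EuclideanSpace ℝ (Fin n)) (r : Set.Ioi (0 : ℝ)),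
    (ENNReal.ofReal (ψ a r.1))⁻¹ * wSet w (ball a r.1) ^ (-(1 / p)) * wLpE p w g (ball a r.1)

/-- The generalized weighted weak Morrey norm `‖f‖_{WM^{p,w}_ψ}`. -/
def morreyWeakNorm {n : ℕ} (p : ℝ) (w : EuclideanSpace ℝ (Fin n) → ℝ)
    (ψ : EuclideanSpace ℝ (Fin n) → ℝ → ℝ) (f : EuclideanSpace ℝ (Fin n) → ℝ) : ℝ≥0∞ :=
  ⨆ (a : EuclideanSpace ℝ (Fin n)) (r : Set.Ioi (0 : ℝ)),
    (ENNReal.ofReal (ψ a r.1))⁻¹ * wSet w (ball a r.1) ^ (-(1 / p)) * wWeakLp p w f (ball a r.1)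

/-- The generalized weighted weak Morrey norm for an `ℝ≥0∞`-valued function. -/
def morreyWeakNormE {n : ℕ} (p : ℝ) (w : EuclideanSpace ℝ (Fin n) → ℝ)
    (ψ : EuclideanSpace ℝ (Fin n) → ℝ → ℝ) (g : EuclideanSpace ℝ (Fin n) → ℝ≥0∞) : ℝ≥0∞ :=
  ⨆ (a : EuclideanSpace ℝ (Fin n)) (r : Set.Ioi (0 : ℝ)),
    (ENNReal.ofReal (ψ a r.1))⁻¹ * wSet w (ball a r.1) ^ (-(1 / p)) * wWeakLpE p w g (ball a r.1)

end

/-! Fix a ball `B(a,r)` and split `f = f·1_{B(a,2r)} + f·1_{B(a,2r)ᶜ}`.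

The `A₁` condition says `w(B)/|B| ≤ c·w(x)` for a.e. `x ∈ B`. Together with the Vitali
covering lemma this gives the weak `(1,1)` inequality `γ·w{Mg > γ} ≤ c·5ⁿ·‖g‖_{L^{1,w}}`
and the doubling property of `w`. The weighted `L¹` norm of the local part is at most
`ψ₁(a,t)·w(B(a,t))·‖f‖` for every `t ∈ (2r,4r)`. Since `∫_{2r}^{4r} dt/t ≥ 1/2`,
averaging over `t` bounds it by `w(B(a,r))·∫_r^∞ ψ₁(a,t) dt/t`.

For the far part, a ball `B(x,s)` centred in `B(a,r)` only sees `f` when `s > r`. It then lies in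
`B(a,t)` for every `t ∈ (2s,4s)`, so the same averaging bounds `M(f·1_{B(a,2r)ᶜ})` on
`B(a,r)` by a multiple of `∫_r^∞ ψ₁(a,t) dt/t`. -/

open scoped NNReal

lemma volume_ball_mul {n : ℕ} (b : EuclideanSpace ℝ (Fin n)) {K s : ℝ} (hK : 0 < K) :
    volume (ball b (K * s)) = ENNReal.ofReal K ^ n * volume (ball b s) := by
  rw [Measure.addHaar_ball_mul_of_pos _ _ hK, ← Measure.addHaar_ball_center volume b,
    finrank_euclideanSpace_fin, ENNReal.ofReal_pow hK.le]

lemma inv_volume_ball_le {n : ℕ} (x a : EuclideanSpace ℝ (Fin n)) {s t K : ℝ} (hs : 0 < s)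
    (ht : 0 < t) (hK : 0 < K) (htK : t ≤ K * s) :
    (volume (ball x s))⁻¹ ≤ ENNReal.ofReal K ^ n * (volume (ball a t))⁻¹ := by
  have hV : volume (ball a t) ≤ ENNReal.ofReal K ^ n * volume (ball x s) := by
    rw [← volume_ball_mul x hK, Measure.addHaar_ball_center, Measure.addHaar_ball_center volume x]
    exact measure_mono (ball_subset_ball htK)
  rw [← div_eq_mul_inv, ENNReal.le_div_iff_mul_le (Or.inl (measure_ball_pos volume a ht).ne')
    (Or.inl measure_ball_lt_top.ne)]
  calc (volume (ball x s))⁻¹ * volume (ball a t)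
      ≤ (volume (ball x s))⁻¹ * (ENNReal.ofReal K ^ n * volume (ball x s)) := by gcongr
    _ = ENNReal.ofReal K ^ n := by
        rw [mul_comm, mul_assoc, ENNReal.mul_inv_cancel (measure_ball_pos volume x hs).ne'
          measure_ball_lt_top.ne, mul_one]

lemma wSet_eq_withDensity {n : ℕ} (w : EuclideanSpace ℝ (Fin n) → ℝ)
    (s : Set (EuclideanSpace ℝ (Fin n))) :
    wSet w s = volume.withDensity (fun x => ENNReal.ofReal (w x)) s :=
  (withDensity_apply' _ s).symm

section Weight

variable {n : ℕ} {w : EuclideanSpace ℝ (Fin n) → ℝ}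

lemma wSet_mono {s t : Set (EuclideanSpace ℝ (Fin n))} (h : s ⊆ t) : wSet w s ≤ wSet w t :=
  lintegral_mono_set h

lemma mul_wSet_half_lt_le_of_forall_le {G : EuclideanSpace ℝ (Fin n) → ℝ≥0∞}
    {s : Set (EuclideanSpace ℝ (Fin n))} {T : ℝ≥0∞} (hG : ∀ x ∈ s, G x ≤ T) (γ : ℝ≥0∞) :
    γ * wSet w {x | x ∈ s ∧ γ / 2 < G x} ≤ 2 * T * wSet w s := by
  rcases eq_empty_or_nonempty {x | x ∈ s ∧ γ / 2 < G x} with h | ⟨x, hx, hγ⟩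
  · simp [h, wSet]
  · have hγT : γ / 2 ≤ T := hγ.le.trans (hG x hx)
    rw [ENNReal.div_le_iff_le_mul (Or.inl two_ne_zero) (Or.inl ENNReal.ofNat_ne_top),
      mul_comm] at hγT
    exact mul_le_mul' hγT (wSet_mono fun y hy => hy.1)

lemma IsWeight.wSet_ball_ne_top (hw : IsWeight w) (a : EuclideanSpace ℝ (Fin n)) (r : ℝ) :
    wSet w (ball a r) ≠ ∞ :=
  ((wSet_mono ball_subset_closedBall).trans_lt
    (hw.2.2.1.integrableOn_isCompact (isCompact_closedBall a r)).lintegral_lt_top).ne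

lemma IsWeight.wSet_ball_ne_zero (hw : IsWeight w) (a : EuclideanSpace ℝ (Fin n)) {r : ℝ}
    (hr : 0 < r) : wSet w (ball a r) ≠ 0 := by
  intro h
  rw [wSet, setLIntegral_eq_zero_iff measurableSet_ball hw.1.ennreal_ofReal] at h
  have hnull : ∀ᵐ x ∂volume.restrict (ball a r), False := by
    filter_upwards [ae_restrict_of_ae hw.2.2.2, (ae_restrict_iff' measurableSet_ball).2 h]
      with x hpos hzero
    simp only [ENNReal.ofReal_eq_zero] at hzero
    exact hzero.not_gt hpos
  rw [Filter.eventually_false_iff_eq_bot, ae_eq_bot, Measure.restrict_eq_zero] at hnull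
  exact (measure_ball_pos volume a hr).ne' hnull

end Weight

def MuckA1With {n : ℕ} (c : ℝ≥0) (w : EuclideanSpace ℝ (Fin n) → ℝ) : Prop :=
  ∀ (a : EuclideanSpace ℝ (Fin n)) (r : ℝ), 0 < r →
    (volume (ball a r))⁻¹ * wSet w (ball a r) *
      essSup (fun x => ENNReal.ofReal (w x)⁻¹) (volume.restrict (ball a r)) ≤ c

lemma MuckA1.exists_pos_muckA1With {n : ℕ} {w : EuclideanSpace ℝ (Fin n) → ℝ}
    (h : MuckA1 w) :
    ∃ c : ℝ≥0, 0 < c ∧ MuckA1With c w :=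
  let ⟨C, hC, hA⟩ := h
  ⟨C.toNNReal, Real.toNNReal_pos.2 hC, hA⟩

namespace MuckA1With

variable {n : ℕ} {w : EuclideanSpace ℝ (Fin n) → ℝ} {c : ℝ≥0}

lemma ae_wSet_div_volume_le (hA : MuckA1With c w) (hw : IsWeight w)
    (a : EuclideanSpace ℝ (Fin n)) {r : ℝ} (hr : 0 < r) :
    ∀ᵐ x ∂volume.restrict (ball a r),
      wSet w (ball a r) / volume (ball a r) ≤ c * ENNReal.ofReal (w x) := by
  filter_upwards [ENNReal.ae_le_essSup (fun x => ENNReal.ofReal (w x)⁻¹),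
    ae_restrict_of_ae hw.2.2.2] with x hess hpos
  have hinv : ENNReal.ofReal (w x)⁻¹ * ENNReal.ofReal (w x) = 1 := by
    rw [← ENNReal.ofReal_mul (inv_nonneg.2 hpos.le), inv_mul_cancel₀ hpos.ne',
      ENNReal.ofReal_one]
  calc wSet w (ball a r) / volume (ball a r)
      = (volume (ball a r))⁻¹ * wSet w (ball a r) * ENNReal.ofReal (w x)⁻¹ *
          ENNReal.ofReal (w x) := by
        rw [mul_assoc _ (ENNReal.ofReal (w x)⁻¹), hinv, mul_one, ENNReal.div_eq_inv_mul]
    _ ≤ (volume (ball a r))⁻¹ * wSet w (ball a r) *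
          essSup (fun x => ENNReal.ofReal (w x)⁻¹) (volume.restrict (ball a r)) *
          ENNReal.ofReal (w x) := by gcongr
    _ ≤ c * ENNReal.ofReal (w x) := by gcongr; exact hA a r hr

lemma wSet_div_volume_mul_setLIntegral_le (hA : MuckA1With c w) (hw : IsWeight w)
    (a : EuclideanSpace ℝ (Fin n)) {r : ℝ} (hr : 0 < r) {s : Set (EuclideanSpace ℝ (Fin n))}
    (hs : s ⊆ ball a r) (g : EuclideanSpace ℝ (Fin n) → ℝ≥0∞) :
    wSet w (ball a r) / volume (ball a r) * ∫⁻ x in s, g x ≤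
      c * ∫⁻ x in s, g x * ENNReal.ofReal (w x) :=
  calc wSet w (ball a r) / volume (ball a r) * ∫⁻ x in s, g x
      ≤ ∫⁻ x in s, wSet w (ball a r) / volume (ball a r) * g x := lintegral_const_mul_le _ _
    _ ≤ ∫⁻ x in s, c * (g x * ENNReal.ofReal (w x)) := by
        refine lintegral_mono_ae ?_
        filter_upwards [ae_restrict_of_ae_restrict_of_subset hs (hA.ae_wSet_div_volume_le hw a hr)]
          with x hx
        calc _ ≤ c * ENNReal.ofReal (w x) * g x := by gcongr
          _ = _ := by ring
    _ = c * ∫⁻ x in s, g x * ENNReal.ofReal (w x) := lintegral_const_mul' _ _ ENNReal.coe_ne_top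

lemma mul_wSet_ball_le (hA : MuckA1With c w) (hw : IsWeight w) (b : EuclideanSpace ℝ (Fin n))
    {s K : ℝ} (hs : 0 < s) (hK : 1 ≤ K) {g : EuclideanSpace ℝ (Fin n) → ℝ≥0∞}
    {γ : ℝ≥0∞} (h : γ * volume (ball b s) ≤ ∫⁻ x in ball b s, g x) :
    γ * wSet w (ball b (K * s)) ≤
      c * ENNReal.ofReal K ^ n * ∫⁻ x in ball b s, g x * ENNReal.ofReal (w x) := by
  have hKs : 0 < K * s := by positivity
  calc γ * wSet w (ball b (K * s))
      = γ * (wSet w (ball b (K * s)) / volume (ball b (K * s)) * volume (ball b (K * s))) := by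
        rw [ENNReal.div_mul_cancel (measure_ball_pos volume b hKs).ne' measure_ball_lt_top.ne]
    _ = ENNReal.ofReal K ^ n *
          (wSet w (ball b (K * s)) / volume (ball b (K * s)) * (γ * volume (ball b s))) := by
        rw [volume_ball_mul b (by linarith : (0 : ℝ) < K)]; ring
    _ ≤ ENNReal.ofReal K ^ n *
          (wSet w (ball b (K * s)) / volume (ball b (K * s)) * ∫⁻ x in ball b s, g x) := by
        gcongr
    _ ≤ ENNReal.ofReal K ^ n * (c * ∫⁻ x in ball b s, g x * ENNReal.ofReal (w x)) := by
        gcongr ENNReal.ofReal K ^ n * ?_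
        exact hA.wSet_div_volume_mul_setLIntegral_le hw b hKs
          (ball_subset_ball (le_mul_of_one_le_left hs.le hK)) g
    _ = c * ENNReal.ofReal K ^ n * ∫⁻ x in ball b s, g x * ENNReal.ofReal (w x) := by ring

lemma wSet_ball_mul_le (hA : MuckA1With c w) (hw : IsWeight w) (b : EuclideanSpace ℝ (Fin n))
    {s K : ℝ} (hs : 0 < s) (hK : 1 ≤ K) :
    wSet w (ball b (K * s)) ≤ c * ENNReal.ofReal K ^ n * wSet w (ball b s) := by
  simpa [wSet] using hA.mul_wSet_ball_le hw b hs hK (g := 1) (γ := 1) (by simp)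

lemma inv_volume_mul_setLIntegral_le (hA : MuckA1With c w) (hw : IsWeight w)
    (a : EuclideanSpace ℝ (Fin n)) {r : ℝ} (hr : 0 < r)
    (g : EuclideanSpace ℝ (Fin n) → ℝ≥0∞) :
    (volume (ball a r))⁻¹ * ∫⁻ x in ball a r, g x ≤
      c * (wSet w (ball a r))⁻¹ * ∫⁻ x in ball a r, g x * ENNReal.ofReal (w x) := by
  have hW0 := hw.wSet_ball_ne_zero a hr
  have hWtop := hw.wSet_ball_ne_top a r
  have h := hA.wSet_div_volume_mul_setLIntegral_le hw a hr subset_rfl g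
  calc (volume (ball a r))⁻¹ * ∫⁻ x in ball a r, g x
      = ((wSet w (ball a r))⁻¹ * wSet w (ball a r)) *
          ((volume (ball a r))⁻¹ * ∫⁻ x in ball a r, g x) := by
        rw [ENNReal.inv_mul_cancel hW0 hWtop, one_mul]
    _ = (wSet w (ball a r))⁻¹ *
          (wSet w (ball a r) / volume (ball a r) * ∫⁻ x in ball a r, g x) := by
        rw [ENNReal.div_eq_inv_mul]; ring
    _ ≤ (wSet w (ball a r))⁻¹ * (c * ∫⁻ x in ball a r, g x * ENNReal.ofReal (w x)) := by
        gcongr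
    _ = c * (wSet w (ball a r))⁻¹ * ∫⁻ x in ball a r, g x * ENNReal.ofReal (w x) := by ring

end MuckA1With

section MaximalFunction

variable {n : ℕ} {w : EuclideanSpace ℝ (Fin n) → ℝ} {c : ℝ≥0}

lemma exists_mul_volume_ball_le_of_lt_HLMax {g : EuclideanSpace ℝ (Fin n) → ℝ}
    {x : EuclideanSpace ℝ (Fin n)} {γ : ℝ≥0∞} (h : γ < HLMax g x) :
    ∃ s > 0, γ * volume (ball x s) ≤ ∫⁻ y in ball x s, ENNReal.ofReal |g y| := by
  obtain ⟨⟨s, hs⟩, hγ⟩ := lt_iSup_iff.1 h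
  refine ⟨s, hs, ?_⟩
  rw [← ENNReal.le_div_iff_mul_le (Or.inl (measure_ball_pos volume x hs).ne')
    (Or.inl measure_ball_lt_top.ne), ENNReal.div_eq_inv_mul]
  exact hγ.le

lemma HLMax_add_le {g₁ g₂ : EuclideanSpace ℝ (Fin n) → ℝ} (hg₁ : Measurable g₁)
    (x : EuclideanSpace ℝ (Fin n)) : HLMax (g₁ + g₂) x ≤ HLMax g₁ x + HLMax g₂ x := by
  refine iSup_le fun s => ?_
  calc (volume (ball x s.1))⁻¹ * ∫⁻ y in ball x s.1, ENNReal.ofReal |(g₁ + g₂) y|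
      ≤ (volume (ball x s.1))⁻¹ *
          ((∫⁻ y in ball x s.1, ENNReal.ofReal |g₁ y|) +
            ∫⁻ y in ball x s.1, ENNReal.ofReal |g₂ y|) := by
        rw [← lintegral_add_left (by fun_prop)]
        gcongr with y
        exact (ENNReal.ofReal_le_ofReal (abs_add_le _ _)).trans ENNReal.ofReal_add_le
    _ ≤ HLMax g₁ x + HLMax g₂ x := by
        rw [mul_add]
        exact add_le_add (le_iSup_of_le s le_rfl) (le_iSup_of_le s le_rfl)

lemma setOf_lt_HLMax_subset {f : EuclideanSpace ℝ (Fin n) → ℝ} (hf : Measurable f)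
    {B : Set (EuclideanSpace ℝ (Fin n))} (hB : MeasurableSet B) (s : Set (EuclideanSpace ℝ (Fin n)))
    (γ : ℝ≥0∞) :
    {x | x ∈ s ∧ γ < HLMax f x} ⊆
      {x | γ / 2 < HLMax (B.indicator f) x} ∪ {x | x ∈ s ∧ γ / 2 < HLMax (Bᶜ.indicator f) x} := by
  rintro x ⟨hx, hγ⟩
  by_contra h
  have h₁ : HLMax (B.indicator f) x ≤ γ / 2 := not_lt.1 fun h' => h (Or.inl h')
  have h₂ : HLMax (Bᶜ.indicator f) x ≤ γ / 2 := not_lt.1 fun h' => h (Or.inr ⟨hx, h'⟩)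
  have hsplit := HLMax_add_le (g₂ := Bᶜ.indicator f) (hf.indicator hB) x
  rw [indicator_self_add_compl] at hsplit
  exact hγ.not_ge ((hsplit.trans (add_le_add h₁ h₂)).trans_eq (ENNReal.add_halves γ))

lemma MuckA1With.mul_wSet_le_of_radius_le (hA : MuckA1With c w) (hw : IsWeight w)
    (g : EuclideanSpace ℝ (Fin n) → ℝ≥0∞) (γ : ℝ≥0∞) (R : ℝ) :
    γ * wSet w {x | ∃ s ∈ Ioc 0 R, γ * volume (ball x s) ≤ ∫⁻ y in ball x s, g y} ≤
      c * 5 ^ n * ∫⁻ x, g x * ENNReal.ofReal (w x) := by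
  set T := {x | ∃ s ∈ Ioc 0 R, γ * volume (ball x s) ≤ ∫⁻ y in ball x s, g y}
  have hsel : ∀ x ∈ T, ∃ s ∈ Ioc 0 R, γ * volume (ball x s) ≤ ∫⁻ y in ball x s, g y :=
    fun _ hx => hx
  choose! ρ hρR hρ using hsel
  obtain ⟨u, huT, hdisj, hcov⟩ :=
    Vitali.exists_disjoint_subfamily_covering_enlargement_closedBall
      T id ρ R (fun x hx => (hρR x hx).2) 4 (by norm_num)
  have hdisj' : u.PairwiseDisjoint fun b => ball b (ρ b) :=
    hdisj.mono fun _ => ball_subset_closedBall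
  have hu : u.Countable := hdisj'.countable_of_isOpen (fun _ _ => isOpen_ball)
    fun b hb => nonempty_ball.2 (hρR b (huT hb)).1
  have hcover : T ⊆ ⋃ b ∈ u, ball b (5 * ρ b) := by
    intro x hx
    obtain ⟨b, hb, hsub⟩ := hcov x hx
    have hb0 := (hρR b (huT hb)).1
    exact mem_biUnion hb <| closedBall_subset_ball (by linarith)
      (hsub (mem_closedBall_self (hρR x hx).1.le))
  set μ := volume.withDensity fun x => ENNReal.ofReal (w x)
  set ν := volume.withDensity fun x => g x * ENNReal.ofReal (w x)
  calc γ * wSet w T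
      ≤ γ * ∑' b : u, μ (ball b (5 * ρ b)) := by
        rw [wSet_eq_withDensity]
        gcongr
        exact (measure_mono hcover).trans (measure_biUnion_le μ hu _)
    _ = ∑' b : u, γ * wSet w (ball b (5 * ρ b)) := by
        simp only [ENNReal.tsum_mul_left, wSet_eq_withDensity, μ]
    _ ≤ ∑' b : u, c * 5 ^ n * ν (ball b (ρ b)) := by
        refine ENNReal.tsum_le_tsum fun b => ?_
        have hb := huT b.2
        simpa [ν, withDensity_apply'] using
          hA.mul_wSet_ball_le hw b (hρR b hb).1 (K := 5) (by norm_num) (hρ b hb)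
    _ = c * 5 ^ n * ν (⋃ b ∈ u, ball b (ρ b)) := by
        rw [ENNReal.tsum_mul_left, measure_biUnion hu hdisj' fun _ _ => measurableSet_ball]
    _ ≤ c * 5 ^ n * ∫⁻ x, g x * ENNReal.ofReal (w x) := by
        gcongr
        exact (measure_mono (subset_univ _)).trans_eq (by simp [ν])

lemma MuckA1With.mul_wSet_lt_HLMax_le (hA : MuckA1With c w) (hw : IsWeight w)
    (g : EuclideanSpace ℝ (Fin n) → ℝ) (γ : ℝ≥0∞) :
    γ * wSet w {x | γ < HLMax g x} ≤
      c * 5 ^ n * ∫⁻ x, ENNReal.ofReal |g x| * ENNReal.ofReal (w x) := by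
  -- Vitali needs bounded radii, so exhaust `{γ < M g}` by the sets where a radius `≤ k` works.
  set T : ℕ → Set (EuclideanSpace ℝ (Fin n)) := fun k => {x | ∃ s ∈ Ioc 0 (k : ℝ),
    γ * volume (ball x s) ≤ ∫⁻ y in ball x s, ENNReal.ofReal |g y|}
  have hT : Monotone T := fun k l hkl x ⟨s, hs, h⟩ =>
    ⟨s, ⟨hs.1, hs.2.trans (Nat.cast_le.2 hkl)⟩, h⟩
  have hsub : {x | γ < HLMax g x} ⊆ ⋃ k, T k := by
    intro x hx
    obtain ⟨s, hs, h⟩ := exists_mul_volume_ball_le_of_lt_HLMax hx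
    exact mem_iUnion.2 ⟨⌈s⌉₊, s, ⟨hs, Nat.le_ceil s⟩, h⟩
  calc γ * wSet w {x | γ < HLMax g x}
      ≤ γ * ⨆ k, wSet w (T k) := by
        simp only [wSet_eq_withDensity]
        rw [← hT.measure_iUnion]
        gcongr
    _ = ⨆ k, γ * wSet w (T k) := ENNReal.mul_iSup _ _
    _ ≤ c * 5 ^ n * ∫⁻ x, ENNReal.ofReal |g x| * ENNReal.ofReal (w x) :=
        iSup_le fun k => hA.mul_wSet_le_of_radius_le hw _ γ k

end MaximalFunction

lemma inv_two_le_lintegral_Ioo_inv {u : ℝ} (hu : 0 < u) :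
    2⁻¹ ≤ ∫⁻ t in Ioo u (2 * u), ENNReal.ofReal t⁻¹ :=
  calc (2⁻¹ : ℝ≥0∞)
      = ∫⁻ _ in Ioo u (2 * u), ENNReal.ofReal (2 * u)⁻¹ := by
        rw [setLIntegral_const, Real.volume_Ioo, ← ENNReal.ofReal_mul (by positivity),
          show (2 * u)⁻¹ * (2 * u - u) = 2⁻¹ by field_simp; ring,
          ENNReal.ofReal_inv_of_pos two_pos, ENNReal.ofReal_ofNat]
    _ ≤ ∫⁻ t in Ioo u (2 * u), ENNReal.ofReal t⁻¹ :=
        setLIntegral_mono (by fun_prop) fun t ht =>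
          ENNReal.ofReal_le_ofReal (inv_anti₀ (hu.trans ht.1) ht.2.le)

lemma le_two_mul_lintegral_Ioi_of_forall_Ioo {X K : ℝ≥0∞} (hK : K ≠ ∞) {φ : ℝ → ℝ≥0∞}
    {r u : ℝ} (hu : 0 < u) (hru : r ≤ u) (h : ∀ t ∈ Ioo u (2 * u), X ≤ K * φ t) :
    X ≤ 2 * K * ∫⁻ t in Ioi r, φ t * ENNReal.ofReal t⁻¹ :=
  calc X = 2 * (2⁻¹ * X) := by
        rw [← mul_assoc, ENNReal.mul_inv_cancel two_ne_zero ENNReal.ofNat_ne_top, one_mul]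
    _ ≤ 2 * ((∫⁻ t in Ioo u (2 * u), ENNReal.ofReal t⁻¹) * X) := by
        gcongr; exact inv_two_le_lintegral_Ioo_inv hu
    _ = 2 * ∫⁻ t in Ioo u (2 * u), X * ENNReal.ofReal t⁻¹ := by
        rw [mul_comm _ X, lintegral_const_mul X (by fun_prop)]
    _ ≤ 2 * ∫⁻ t in Ioo u (2 * u), K * (φ t * ENNReal.ofReal t⁻¹) := by
        gcongr 2 * ?_
        refine setLIntegral_mono' measurableSet_Ioo fun t ht => ?_
        rw [← mul_assoc]
        gcongr
        exact h t ht
    _ = 2 * K * ∫⁻ t in Ioo u (2 * u), φ t * ENNReal.ofReal t⁻¹ := by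
        rw [lintegral_const_mul' _ _ hK, mul_assoc]
    _ ≤ 2 * K * ∫⁻ t in Ioi r, φ t * ENNReal.ofReal t⁻¹ := by
        gcongr; exact fun t ht => hru.trans_lt ht.1

section Morrey

variable {n : ℕ} {w : EuclideanSpace ℝ (Fin n) → ℝ}
  {ψ : EuclideanSpace ℝ (Fin n) → ℝ → ℝ}

lemma setLIntegral_ball_le_morreyNorm (hw : IsWeight w) {f : EuclideanSpace ℝ (Fin n) → ℝ}
    (hN : morreyNorm 1 w ψ f ≠ ∞) (a : EuclideanSpace ℝ (Fin n)) {r : ℝ} (hr : 0 < r) :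
    ∫⁻ x in ball a r, ENNReal.ofReal |f x| * ENNReal.ofReal (w x) ≤
      ENNReal.ofReal (ψ a r) * wSet w (ball a r) * morreyNorm 1 w ψ f := by
  have hWtop := hw.wSet_ball_ne_top a r
  have h : (ENNReal.ofReal (ψ a r))⁻¹ * wSet w (ball a r) ^ (-(1 / (1 : ℝ))) *
      wLp 1 w f (ball a r) ≤ morreyNorm 1 w ψ f :=
    le_iSup₂ (f := fun a (r : Ioi (0 : ℝ)) => (ENNReal.ofReal (ψ a r.1))⁻¹ *
      wSet w (ball a r.1) ^ (-(1 / (1 : ℝ))) * wLp 1 w f (ball a r.1)) a ⟨r, hr⟩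
  simp only [wLp, div_one, ENNReal.rpow_one, ENNReal.rpow_neg_one] at h
  rw [← ENNReal.mul_inv (Or.inr hWtop) (Or.inl ENNReal.ofReal_ne_top),
    ← ENNReal.div_eq_inv_mul, ENNReal.div_le_iff_le_mul (Or.inr hN)
      (Or.inl (ENNReal.mul_ne_top ENNReal.ofReal_ne_top hWtop))] at h
  rwa [mul_comm]

lemma morreyWeakNormE_one_le {G : EuclideanSpace ℝ (Fin n) → ℝ≥0∞} {A : ℝ≥0∞}
    (h : ∀ (a : EuclideanSpace ℝ (Fin n)) (r γ : ℝ), 0 < r → 0 < γ →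
      ENNReal.ofReal γ * wSet w {x | x ∈ ball a r ∧ ENNReal.ofReal γ < G x} ≤
        ENNReal.ofReal (ψ a r) * wSet w (ball a r) * A) :
    morreyWeakNormE 1 w ψ G ≤ A := by
  refine iSup₂_le fun a r => ?_
  simp only [wWeakLpE, div_one, ENNReal.rpow_one, ENNReal.rpow_neg_one, ENNReal.mul_iSup]
  refine iSup_le fun γ => ?_
  calc _ = ENNReal.ofReal γ * wSet w {x | x ∈ ball a r ∧ ENNReal.ofReal γ < G x} /
        wSet w (ball a r) / ENNReal.ofReal (ψ a r) := by
        simp only [ENNReal.div_eq_inv_mul]; ring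
    _ ≤ A := by
        refine ENNReal.div_le_of_le_mul (ENNReal.div_le_of_le_mul ?_)
        calc _ ≤ ENNReal.ofReal (ψ a r) * wSet w (ball a r) * A := h a r γ r.2 γ.2
          _ = A * ENNReal.ofReal (ψ a r) * wSet w (ball a r) := by ring

end Morrey

namespace MuckA1With

variable {n : ℕ} {w : EuclideanSpace ℝ (Fin n) → ℝ} {c : ℝ≥0}
  {ψ : EuclideanSpace ℝ (Fin n) → ℝ → ℝ} {f : EuclideanSpace ℝ (Fin n) → ℝ}

lemma inv_volume_mul_setLIntegral_le_morreyNorm (hA : MuckA1With c w) (hw : IsWeight w)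
    (hN : morreyNorm 1 w ψ f ≠ ∞) (a : EuclideanSpace ℝ (Fin n)) {r : ℝ} (hr : 0 < r) :
    (volume (ball a r))⁻¹ * ∫⁻ x in ball a r, ENNReal.ofReal |f x| ≤
      c * ENNReal.ofReal (ψ a r) * morreyNorm 1 w ψ f :=
  calc (volume (ball a r))⁻¹ * ∫⁻ x in ball a r, ENNReal.ofReal |f x|
      ≤ c * (wSet w (ball a r))⁻¹ *
          ∫⁻ x in ball a r, ENNReal.ofReal |f x| * ENNReal.ofReal (w x) :=
        hA.inv_volume_mul_setLIntegral_le hw a hr _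
    _ ≤ c * (wSet w (ball a r))⁻¹ *
          (ENNReal.ofReal (ψ a r) * wSet w (ball a r) * morreyNorm 1 w ψ f) := by
        gcongr; exact setLIntegral_ball_le_morreyNorm hw hN a hr
    _ = ((wSet w (ball a r))⁻¹ * wSet w (ball a r)) *
          (c * ENNReal.ofReal (ψ a r) * morreyNorm 1 w ψ f) := by ring
    _ = c * ENNReal.ofReal (ψ a r) * morreyNorm 1 w ψ f := by
        rw [ENNReal.inv_mul_cancel (hw.wSet_ball_ne_zero a hr) (hw.wSet_ball_ne_top a r), one_mul]

lemma setLIntegral_ball_two_mul_le (hA : MuckA1With c w) (hw : IsWeight w)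
    (hN : morreyNorm 1 w ψ f ≠ ∞) (a : EuclideanSpace ℝ (Fin n)) {r : ℝ} (hr : 0 < r) :
    ∫⁻ x in ball a (2 * r), ENNReal.ofReal |f x| * ENNReal.ofReal (w x) ≤
      2 * (c * 4 ^ n * wSet w (ball a r) * morreyNorm 1 w ψ f) *
        ∫⁻ t in Ioi r, ENNReal.ofReal (ψ a t) * ENNReal.ofReal t⁻¹ := by
  have hW := hw.wSet_ball_ne_top a r
  refine le_two_mul_lintegral_Ioi_of_forall_Ioo (u := 2 * r) (by finiteness) (by positivity)
    (by linarith) fun t ht => ?_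
  have ht0 : 0 < t := by linarith [ht.1]
  have hWt : wSet w (ball a t) ≤ c * 4 ^ n * wSet w (ball a r) :=
    calc wSet w (ball a t) ≤ wSet w (ball a (4 * r)) :=
          wSet_mono (ball_subset_ball (by linarith [ht.2]))
      _ ≤ c * 4 ^ n * wSet w (ball a r) := by
          simpa using hA.wSet_ball_mul_le hw a hr (K := 4) (by norm_num)
  calc ∫⁻ x in ball a (2 * r), ENNReal.ofReal |f x| * ENNReal.ofReal (w x)
      ≤ ∫⁻ x in ball a t, ENNReal.ofReal |f x| * ENNReal.ofReal (w x) :=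
        lintegral_mono_set (ball_subset_ball ht.1.le)
    _ ≤ ENNReal.ofReal (ψ a t) * wSet w (ball a t) * morreyNorm 1 w ψ f :=
        setLIntegral_ball_le_morreyNorm hw hN a ht0
    _ ≤ ENNReal.ofReal (ψ a t) * (c * 4 ^ n * wSet w (ball a r)) * morreyNorm 1 w ψ f := by
        gcongr
    _ = c * 4 ^ n * wSet w (ball a r) * morreyNorm 1 w ψ f * ENNReal.ofReal (ψ a t) := by ring

lemma HLMax_indicator_compl_le (hA : MuckA1With c w) (hw : IsWeight w)
    (hN : morreyNorm 1 w ψ f ≠ ∞) (a : EuclideanSpace ℝ (Fin n)) {r : ℝ} (hr : 0 < r)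
    {x : EuclideanSpace ℝ (Fin n)} (hx : x ∈ ball a r) :
    HLMax ((ball a (2 * r))ᶜ.indicator f) x ≤
      2 * (c * 4 ^ n * morreyNorm 1 w ψ f) *
        ∫⁻ t in Ioi r, ENNReal.ofReal (ψ a t) * ENNReal.ofReal t⁻¹ := by
  have hxa := mem_ball.1 hx
  refine iSup_le fun ⟨s, (hs : 0 < s)⟩ => ?_
  rcases le_or_gt s r with hsr | hrs
  · have hzero : ∫⁻ y in ball x s, ENNReal.ofReal |(ball a (2 * r))ᶜ.indicator f y| = 0 := by
      refine (setLIntegral_congr_fun measurableSet_ball fun y hy => ?_).trans lintegral_zero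
      have hy : y ∈ ball a (2 * r) :=
        mem_ball.2 (by linarith [dist_triangle y x a, mem_ball.1 hy])
      simp [hy]
    simp [hzero]
  · refine le_two_mul_lintegral_Ioi_of_forall_Ioo (u := 2 * s) (by finiteness) (by positivity)
      (by linarith) fun t ht => ?_
    have ht0 : 0 < t := by linarith [ht.1]
    have hsub : ball x s ⊆ ball a t := fun y hy => mem_ball.2 (by
      linarith [dist_triangle y x a, mem_ball.1 hy, ht.1])
    calc (volume (ball x s))⁻¹ *
          ∫⁻ y in ball x s, ENNReal.ofReal |(ball a (2 * r))ᶜ.indicator f y|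
        ≤ (volume (ball x s))⁻¹ * ∫⁻ y in ball a t, ENNReal.ofReal |f y| := by
          gcongr (volume (ball x s))⁻¹ * ?_
          refine (lintegral_mono_set hsub).trans (lintegral_mono fun y => ?_)
          by_cases hy : y ∈ (ball a (2 * r))ᶜ <;> simp [hy]
      _ ≤ 4 ^ n * (volume (ball a t))⁻¹ * ∫⁻ y in ball a t, ENNReal.ofReal |f y| := by
          gcongr
          simpa using inv_volume_ball_le x a hs ht0 (K := 4) (by norm_num) (by linarith [ht.2])
      _ ≤ 4 ^ n * (c * ENNReal.ofReal (ψ a t) * morreyNorm 1 w ψ f) := by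
          rw [mul_assoc]
          gcongr 4 ^ n * ?_
          exact hA.inv_volume_mul_setLIntegral_le_morreyNorm hw hN a ht0
      _ = c * 4 ^ n * morreyNorm 1 w ψ f * ENNReal.ofReal (ψ a t) := by ring

lemma mul_wSet_ball_inter_lt_HLMax_le (hA : MuckA1With c w) (hw : IsWeight w)
    (hf : Measurable f) (hN : morreyNorm 1 w ψ f ≠ ∞) (a : EuclideanSpace ℝ (Fin n))
    {r : ℝ} (hr : 0 < r) (γ : ℝ≥0∞) :
    γ * wSet w {x | x ∈ ball a r ∧ γ < HLMax f x} ≤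
      4 * c * 4 ^ n * (c * 5 ^ n + 1) *
        (∫⁻ t in Ioi r, ENNReal.ofReal (ψ a t) * ENNReal.ofReal t⁻¹) *
        wSet w (ball a r) * morreyNorm 1 w ψ f := by
  set L := ∫⁻ t in Ioi r, ENNReal.ofReal (ψ a t) * ENNReal.ofReal t⁻¹
  set N := morreyNorm 1 w ψ f
  set B := ball a (2 * r)
  set S₁ := {x | γ / 2 < HLMax (B.indicator f) x}
  set S₂ := {x | x ∈ ball a r ∧ γ / 2 < HLMax (Bᶜ.indicator f) x}
  have hcover : {x | x ∈ ball a r ∧ γ < HLMax f x} ⊆ S₁ ∪ S₂ :=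
    setOf_lt_HLMax_subset hf measurableSet_ball _ γ
  have hS₁ :
      γ * wSet w S₁ ≤ 2 * (c * 5 ^ n * (2 * (c * 4 ^ n * wSet w (ball a r) * N) * L)) :=
    calc γ * wSet w S₁ = 2 * (γ / 2 * wSet w S₁) := by
          rw [← mul_assoc, ENNReal.mul_div_cancel two_ne_zero ENNReal.ofNat_ne_top]
      _ ≤ 2 * (c * 5 ^ n *
            ∫⁻ x, ENNReal.ofReal |B.indicator f x| * ENNReal.ofReal (w x)) := by
          gcongr 2 * ?_; exact hA.mul_wSet_lt_HLMax_le hw _ _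
      _ = 2 * (c * 5 ^ n * ∫⁻ x in B, ENNReal.ofReal |f x| * ENNReal.ofReal (w x)) := by
          rw [← lintegral_indicator measurableSet_ball]
          congr 3 with x
          by_cases hx : x ∈ ball a (2 * r) <;> simp [B, hx]
      _ ≤ 2 * (c * 5 ^ n * (2 * (c * 4 ^ n * wSet w (ball a r) * N) * L)) := by
          gcongr; exact hA.setLIntegral_ball_two_mul_le hw hN a hr
  have hS₂ : γ * wSet w S₂ ≤ 2 * (2 * (c * 4 ^ n * N) * L) * wSet w (ball a r) :=
    mul_wSet_half_lt_le_of_forall_le (fun x hx => hA.HLMax_indicator_compl_le hw hN a hr hx) γ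
  calc γ * wSet w {x | x ∈ ball a r ∧ γ < HLMax f x}
      ≤ γ * (wSet w S₁ + wSet w S₂) := by
        gcongr
        simp only [wSet_eq_withDensity]
        exact (measure_mono hcover).trans (measure_union_le _ _)
    _ ≤ 2 * (c * 5 ^ n * (2 * (c * 4 ^ n * wSet w (ball a r) * N) * L)) +
          2 * (2 * (c * 4 ^ n * N) * L) * wSet w (ball a r) := by
        rw [mul_add]; exact add_le_add hS₁ hS₂
    _ = 4 * c * 4 ^ n * (c * 5 ^ n + 1) * L * wSet w (ball a r) * N := by ring

end MuckA1With

theorem statement11_general {n : ℕ}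
    (w : EuclideanSpace ℝ (Fin n) → ℝ) (hw : IsWeight w) (hA1 : MuckA1 w)
    (ψ₁ ψ₂ : EuclideanSpace ℝ (Fin n) → ℝ → ℝ)
    (C : ℝ) (hC : 0 < C)
    (hcond : ∀ (a : EuclideanSpace ℝ (Fin n)) (r : ℝ), 0 < r →
      (∫⁻ t in Set.Ioi r, ENNReal.ofReal (ψ₁ a t) * ENNReal.ofReal t⁻¹) ≤
        ENNReal.ofReal (C * ψ₂ a r)) :
    ∃ C' : ℝ, 0 < C' ∧ ∀ f : EuclideanSpace ℝ (Fin n) → ℝ,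
      MemLocWLp 1 w f → morreyNorm 1 w ψ₁ f < ⊤ →
      morreyWeakNormE 1 w ψ₂ (HLMax f) ≤ ENNReal.ofReal C' * morreyNorm 1 w ψ₁ f := by
  obtain ⟨c, hc, hA⟩ := hA1.exists_pos_muckA1With
  set K : ℝ≥0 := 4 * c * 4 ^ n * (c * 5 ^ n + 1) * C.toNNReal
  refine ⟨K, NNReal.coe_pos.2 (mul_pos (by positivity) (Real.toNNReal_pos.2 hC)),
    fun f hf hN => morreyWeakNormE_one_le fun a r γ hr _ => ?_⟩
  calc ENNReal.ofReal γ * wSet w {x | x ∈ ball a r ∧ ENNReal.ofReal γ < HLMax f x}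
      ≤ 4 * c * 4 ^ n * (c * 5 ^ n + 1) *
          (∫⁻ t in Ioi r, ENNReal.ofReal (ψ₁ a t) * ENNReal.ofReal t⁻¹) *
          wSet w (ball a r) * morreyNorm 1 w ψ₁ f :=
        hA.mul_wSet_ball_inter_lt_HLMax_le hw hf.1 hN.ne a hr _
    _ ≤ 4 * c * 4 ^ n * (c * 5 ^ n + 1) * ENNReal.ofReal (C * ψ₂ a r) *
          wSet w (ball a r) * morreyNorm 1 w ψ₁ f := by
        gcongr; exact hcond a r hr
    _ = ENNReal.ofReal (ψ₂ a r) * wSet w (ball a r) *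
          (ENNReal.ofReal K * morreyNorm 1 w ψ₁ f) := by
        rw [ENNReal.ofReal_mul hC.le, ENNReal.ofReal_coe_nnreal]
        simp only [K, ENNReal.coe_mul, ENNReal.coe_pow, ENNReal.coe_add, ENNReal.coe_ofNat,
          ENNReal.coe_one]
        rw [ENNReal.ofReal]
        ring

/-- Let `w ∈ A_1`, and let `ψ₁, ψ₂` be positive functions on `ℝⁿ × (0,∞)`
with `∫_r^∞ ψ₁(a,t) dt/t ≤ C·ψ₂(a,r)` for all `(a,r)`. Then the Hardy–Littlewood maximal
operator is bounded from `M^{1,w}_{ψ₁}` to `WM^{1,w}_{ψ₂}`. -/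
theorem statement11 {n : ℕ}
    (w : EuclideanSpace ℝ (Fin n) → ℝ) (hw : IsWeight w) (hA1 : MuckA1 w)
    (ψ₁ ψ₂ : EuclideanSpace ℝ (Fin n) → ℝ → ℝ)
    (hψ₁ : ∀ a r, 0 < r → 0 < ψ₁ a r) (hψ₂ : ∀ a r, 0 < r → 0 < ψ₂ a r)
    (C : ℝ) (hC : 0 < C)
    (hcond : ∀ (a : EuclideanSpace ℝ (Fin n)) (r : ℝ), 0 < r →
      (∫⁻ t in Set.Ioi r, ENNReal.ofReal (ψ₁ a t) * ENNReal.ofReal t⁻¹) ≤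
        ENNReal.ofReal (C * ψ₂ a r)) :
    ∃ C' : ℝ, 0 < C' ∧ ∀ f : EuclideanSpace ℝ (Fin n) → ℝ,
      MemLocWLp 1 w f → morreyNorm 1 w ψ₁ f < ⊤ →
      morreyWeakNormE 1 w ψ₂ (HLMax f) ≤ ENNReal.ofReal C' * morreyNorm 1 w ψ₁ f :=
  statement11_general w hw hA1 ψ₁ ψ₂ C hC hcond
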